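/- Let P = P1 ∪ P2 be a propositional logic program such that P2 potentially uses P1. Then the set of stable models of P equals the union over all stable models M of P1 of the stable models of P2 ∪ facts(M). -/

import Mathlib

/-- A propositional logic-program rule `head :- pos, not neg`.
`head = none` represents a strong constraint (rule with empty head). -/
structure LPRule where
  head : Option ℕ
  pos : Finset ℕ
  neg : Finset ℕ
deriving DecidableEq

namespace LP

/-- Truth of a rule head w.r.t. an interpretation; an empty head is never true. -/
def headTrue (I : Set ℕ) : Option ℕ → Prop
  | none => False
  | some a => a ∈ I

/-- The body of a rule is true w.r.t. `I`. -/
def bodyTrue (I : Set ℕ) (r : LPRule) : Prop :=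
  (∀ b ∈ r.pos, b ∈ I) ∧ (∀ b ∈ r.neg, b ∉ I)

/-- `I` satisfies rule `r`. -/
def satRule (I : Set ℕ) (r : LPRule) : Prop := bodyTrue I r → headTrue I r.head

/-- `I` is a model of the program `P`. -/
def isModel (P : Set LPRule) (I : Set ℕ) : Prop := ∀ r ∈ P, satRule I r

/-- A positive (negation-free) program. -/
def isPositive (P : Set LPRule) : Prop := ∀ r ∈ P, r.neg = ∅

/-- A constraint-free program (no rules with empty head). -/
def constraintFree (P : Set LPRule) : Prop := ∀ r ∈ P, r.head ≠ none

/-- The Gelfond-Lifschitz reduct `P^I`. -/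
def reduct (P : Set LPRule) (I : Set ℕ) : Set LPRule :=
  (fun r => LPRule.mk r.head r.pos ∅) '' {r ∈ P | ∀ b ∈ r.neg, b ∉ I}

/-- `M` is the least model of `P`. -/
def isLeastModel (P : Set LPRule) (M : Set ℕ) : Prop :=
  isModel P M ∧ ∀ M', isModel P M' → M ⊆ M'

/-- `M` is a stable model of `P`: it is the least model of the reduct `P^M`. -/
def isStable (P : Set LPRule) (M : Set ℕ) : Prop := isLeastModel (reduct P M) M

/-- `facts S` is the set of facts `{p :- | p ∈ S}`. -/
def facts (S : Set ℕ) : Set LPRule := (fun p => LPRule.mk (some p) ∅ ∅) '' S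

/-- The atoms occurring in a rule. -/
def ruleAtoms (r : LPRule) : Set ℕ := {a | r.head = some a} ∪ ↑r.pos ∪ ↑r.neg

/-- The Herbrand base of a program: all atoms occurring in it. -/
def atoms (P : Set LPRule) : Set ℕ := ⋃ r ∈ P, ruleAtoms r

/-- `p` depends on `q`: some rule has head `p` and `q` in its body. -/
def dependsOn (P : Set LPRule) (p q : ℕ) : Prop :=
  ∃ r ∈ P, r.head = some p ∧ (q ∈ r.pos ∨ q ∈ r.neg)

/-- `P` is stratified: no rule with head `p` and `not q` in the body where
`q` transitively depends on `p`. -/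
def stratified (P : Set LPRule) : Prop :=
  ∀ r ∈ P, ∀ p, r.head = some p → ∀ q ∈ r.neg, ¬ Relation.TransGen (dependsOn P) q p

/-- Hypotheses `H` do not occur in rule heads of `P`. -/
def hypFree (P : Set LPRule) (H : Finset ℕ) : Prop :=
  ∀ r ∈ P, ∀ h ∈ H, r.head ≠ some h

/-- `S` is an admissible solution: `S ⊆ H` and some stable model of
`P ∪ facts S` makes all observations true. -/
def admissible (P : Set LPRule) (H obsP obsN : Finset ℕ) (S : Set ℕ) : Prop :=
  S ⊆ ↑H ∧ ∃ M, isStable (P ∪ facts S) M ∧ (∀ o ∈ obsP, o ∈ M) ∧ (∀ o ∈ obsN, o ∉ M)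

/-- `sum_γ`: total penalty of the hypotheses of `H` belonging to `S`. -/
noncomputable def cost (γ : ℕ → NNReal) (H : Finset ℕ) (S : Set ℕ) : NNReal :=
  ∑ h ∈ H, S.indicator γ h

/-- `S` is an optimal solution: admissible with minimal total penalty. -/
def optimal (P : Set LPRule) (H obsP obsN : Finset ℕ) (γ : ℕ → NNReal) (S : Set ℕ) : Prop :=
  admissible P H obsP obsN S ∧
  ∀ S', admissible P H obsP obsN S' → cost γ H S ≤ cost γ H S'

end LP

namespace LP

/-- `P2` potentially uses `P1`: no head atom of `P2` occurs in `P1`. -/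
def potentiallyUses (P2 P1 : Set LPRule) : Prop :=
  ∀ r ∈ P2, ∀ a, r.head = some a → a ∉ atoms P1

/-- The translated program `lpw(𝒫)`: the original program `P`, the guessing rules
`h :- sol h`, `sol h :- not nsol h`, `nsol h :- not sol h` for each hypothesis `h ∈ H`,
and the strong constraints `:- not a` (resp. `:- a`) for positive (resp. negative)
observations. -/
def lpw (P : Set LPRule) (H obsP obsN : Finset ℕ) (sol nsol : ℕ → ℕ) : Set LPRule :=
  P ∪ (⋃ h ∈ (↑H : Set ℕ),
        {LPRule.mk (some h) {sol h} ∅,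
         LPRule.mk (some (sol h)) ∅ {nsol h},
         LPRule.mk (some (nsol h)) ∅ {sol h}})
    ∪ ((fun a => LPRule.mk none ∅ {a}) '' ↑obsP)
    ∪ ((fun a => LPRule.mk none {a} ∅) '' ↑obsN)

/-- The atoms `sol h` and `nsol h` are pairwise distinct fresh atoms not occurring
in `P`, `H`, or among the observations. -/
def freshAtoms (P : Set LPRule) (H obsP obsN : Finset ℕ) (sol nsol : ℕ → ℕ) : Prop :=
  Function.Injective sol ∧ Function.Injective nsol ∧ (∀ h h', sol h ≠ nsol h') ∧
  ∀ h ∈ H, sol h ∉ atoms P ∪ ↑H ∪ ↑obsP ∪ ↑obsN ∧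
           nsol h ∉ atoms P ∪ ↑H ∪ ↑obsP ∪ ↑obsN

/-- The total weak-constraint penalty of a model `M`: the weak constraint `:~ h [γ(h)]`
is violated by `M` iff `h ∈ M`, so the penalty is the sum of `γ(h)` over `h ∈ H ∩ M`. -/
noncomputable def penalty (γ : ℕ → NNReal) (H : Finset ℕ) (M : Set ℕ) : NNReal :=
  cost γ H M

/-- `M` is a best model of the translated program: a stable model (which in particular
satisfies all strong constraints) minimizing the total weight of violated weak
constraints. -/
def isBest (P : Set LPRule) (H obsP obsN : Finset ℕ) (γ : ℕ → NNReal)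
    (sol nsol : ℕ → ℕ) (M : Set ℕ) : Prop :=
  isStable (lpw P H obsP obsN sol nsol) M ∧
  ∀ M', isStable (lpw P H obsP obsN sol nsol) M' → penalty γ H M ≤ penalty γ H M'

end LP

/-!
The reduct of `P1 ∪ P2` w.r.t. `M` is the union of the two reducts, and the reduct of `P1`
only sees `M ∩ atoms P1`. So everything reduces to splitting least models of positive
programs `P ∪ Q` where the atoms of `P` lie in a set `A` and the heads of `Q` lie outside `A`:
a competitor of `M` can be replaced by the interpretation that agrees with it inside `A` and
with `M` outside `A`, because `Q` cannot derive anything inside `A` and `P` cannot see outside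
it. Conversely, a stable model of `P2 ∪ facts M1` meets `atoms P1` exactly in `M1`.
-/

namespace LP

def heads (P : Set LPRule) : Set ℕ := {a | ∃ r ∈ P, r.head = some a}

lemma heads_subset_atoms (P : Set LPRule) : heads P ⊆ atoms P := by
  rintro a ⟨r, hr, ha⟩
  exact Set.mem_biUnion hr (Or.inl (Or.inl ha))

lemma potentiallyUses.heads_subset {P2 P1 : Set LPRule} (h : potentiallyUses P2 P1) :
    heads P2 ⊆ (atoms P1)ᶜ := by
  rintro a ⟨r, hr, ha⟩
  exact h r hr a ha

section Rules

variable {r : LPRule} {A I J : Set ℕ}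

lemma bodyTrue_mono (hr : r.neg = ∅) (hIJ : I ⊆ J) (h : bodyTrue I r) : bodyTrue J r :=
  ⟨fun b hb => hIJ (h.1 b hb), by simp [hr]⟩

lemma bodyTrue_inter_iff (hr : ruleAtoms r ⊆ A) : bodyTrue (I ∩ A) r ↔ bodyTrue I r := by
  unfold bodyTrue
  refine and_congr (forall₂_congr fun b hb => ?_) (forall₂_congr fun b hb => ?_)
  · exact and_iff_left (hr (Or.inl (Or.inr hb)))
  · exact not_congr (and_iff_left (hr (Or.inr hb)))

lemma headTrue_inter_iff (hr : ruleAtoms r ⊆ A) :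
    headTrue (I ∩ A) r.head ↔ headTrue I r.head := by
  cases hh : r.head with
  | none => exact Iff.rfl
  | some a => exact and_iff_left (hr (Or.inl (Or.inl hh)))

lemma satRule_inter_iff (hr : ruleAtoms r ⊆ A) : satRule (I ∩ A) r ↔ satRule I r :=
  imp_congr (bodyTrue_inter_iff hr) (headTrue_inter_iff hr)

end Rules

section Models

variable {P Q R : Set LPRule} {A I M N S T X : Set ℕ}

lemma isModel_union : isModel (P ∪ Q) I ↔ isModel P I ∧ isModel Q I :=
  ⟨fun h => ⟨fun r hr => h r (Or.inl hr), fun r hr => h r (Or.inr hr)⟩,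
    fun h r hr => hr.elim (h.1 r) (h.2 r)⟩

lemma isModel_facts : isModel (facts S) I ↔ S ⊆ I := by
  simp only [isModel, facts, Set.forall_mem_image]
  exact forall₂_congr fun p _ => iff_of_eq (by simp [satRule, bodyTrue, headTrue])

lemma isModel_inter_iff (hR : atoms R ⊆ A) : isModel R (I ∩ A) ↔ isModel R I :=
  forall₂_congr fun _ hr => satRule_inter_iff ((Set.subset_biUnion_of_mem hr).trans hR)

lemma isModel_inter (hR : isPositive R) (hM : isModel R M) (hN : isModel R N) :
    isModel R (M ∩ N) := by
  intro r hr hb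
  have hM' := hM r hr (bodyTrue_mono (hR r hr) Set.inter_subset_left hb)
  have hN' := hN r hr (bodyTrue_mono (hR r hr) Set.inter_subset_right hb)
  cases hh : r.head with
  | none => rw [hh] at hM'; exact hM'
  | some a => rw [hh] at hM' hN'; exact ⟨hM', hN'⟩

lemma isModel_of_subset (hR : isPositive R) (hM : isModel R M) (hX : heads R ⊆ X)
    (hMT : M ∩ X ⊆ T) (hTM : T ⊆ M) : isModel R T := by
  intro r hr hb
  have hhead := hM r hr (bodyTrue_mono (hR r hr) hTM hb)
  cases hh : r.head with
  | none => rw [hh] at hhead; exact hhead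
  | some a =>
    rw [hh] at hhead
    exact hMT ⟨hhead, hX ⟨r, hr, hh⟩⟩

theorem isLeastModel_union_iff (h1 : isPositive P) (h2 : isPositive Q) (hP : atoms P ⊆ A)
    (hQ : heads Q ⊆ Aᶜ) :
    isLeastModel (P ∪ Q) M ↔ isLeastModel P (M ∩ A) ∧ isLeastModel (Q ∪ facts (M ∩ A)) M := by
  simp only [isLeastModel, isModel_union, isModel_facts, isModel_inter_iff hP]
  constructor
  · rintro ⟨⟨hMP, hMQ⟩, hmin⟩
    refine ⟨⟨hMP, fun N hN => ?_⟩, ⟨hMQ, Set.inter_subset_left⟩, fun N ⟨hNQ, hMN⟩ => ?_⟩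
    · -- `N ∩ M` inside `A`, `M` outside `A`, is a model of `P ∪ Q`
      have hT : isModel P ((N ∩ M ∩ A) ∪ (M \ A)) := by
        rw [← isModel_inter_iff hP, Set.union_inter_distrib_right, Set.sdiff_inter_self,
          Set.union_empty, Set.inter_assoc, Set.inter_self, isModel_inter_iff hP]
        exact isModel_inter h1 hN hMP
      have hTQ : isModel Q ((N ∩ M ∩ A) ∪ (M \ A)) :=
        isModel_of_subset h2 hMQ hQ (fun _ ha => Or.inr ha)
          (Set.union_subset (fun _ ha => ha.1.2) Set.sdiff_subset)
      rintro a ⟨haM, haA⟩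
      rcases hmin _ ⟨hT, hTQ⟩ haM with h | h
      exacts [h.1.1, absurd haA h.2]
    · have hNP : isModel P (N ∩ M) := by
        rwa [← isModel_inter_iff hP, Set.inter_assoc, Set.inter_eq_right.2 hMN,
          isModel_inter_iff hP]
      exact fun _ ha => (hmin _ ⟨hNP, isModel_inter h2 hNQ hMQ⟩ ha).1
  · rintro ⟨⟨hMP, hminP⟩, ⟨hMQ, -⟩, hminQ⟩
    refine ⟨⟨hMP, hMQ⟩, fun N ⟨hNP, hNQ⟩ => hminQ N ⟨hNQ, ?_⟩⟩
    exact (hminP _ ((isModel_inter_iff hP).2 hNP)).trans Set.inter_subset_left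

lemma inter_eq_of_isLeastModel_union_facts (hQ : isPositive Q) (hQA : heads Q ⊆ Aᶜ)
    (hSA : S ⊆ A) (hM : isLeastModel (Q ∪ facts S) M) : M ∩ A = S := by
  obtain ⟨hMQ, hMS⟩ := isModel_union.1 hM.1
  have hSM : S ⊆ M := isModel_facts.1 hMS
  have hT : isModel (Q ∪ facts S) (S ∪ (M \ A)) :=
    isModel_union.2 ⟨isModel_of_subset hQ hMQ hQA (fun _ ha => Or.inr ha)
      (Set.union_subset hSM Set.sdiff_subset), isModel_facts.2 Set.subset_union_left⟩
  refine subset_antisymm ?_ fun a ha => ⟨hSM ha, hSA ha⟩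
  rintro a ⟨haM, haA⟩
  rcases hM.2 _ hT haM with h | h
  exacts [h, absurd haA h.2]

end Models

section Reduct

variable {P Q : Set LPRule} {M S : Set ℕ}

lemma isPositive_reduct (P : Set LPRule) (I : Set ℕ) : isPositive (reduct P I) := by
  rintro _ ⟨r, -, rfl⟩
  rfl

lemma atoms_reduct_subset (P : Set LPRule) (I : Set ℕ) : atoms (reduct P I) ⊆ atoms P := by
  rintro a ha
  obtain ⟨_, ⟨r, hr, rfl⟩, ha⟩ := Set.mem_iUnion₂.1 ha
  refine Set.mem_biUnion hr.1 ?_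
  simp only [ruleAtoms, Finset.coe_empty, Set.union_empty] at ha
  exact Or.inl ha

lemma heads_reduct_subset (P : Set LPRule) (I : Set ℕ) : heads (reduct P I) ⊆ heads P := by
  rintro a ⟨_, ⟨r, hr, rfl⟩, ha⟩
  exact ⟨r, hr.1, ha⟩

lemma reduct_union (P Q : Set LPRule) (I : Set ℕ) :
    reduct (P ∪ Q) I = reduct P I ∪ reduct Q I := by
  rw [reduct, reduct, reduct, ← Set.image_union, ← Set.sep_union]
  rfl

lemma reduct_facts (S I : Set ℕ) : reduct (facts S) I = facts S := by
  rw [reduct, Set.sep_eq_self_iff_mem_true.2 fun _ ⟨_, _, h⟩ => by simp [← h], facts,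
    Set.image_image]

lemma reduct_inter_atoms (P : Set LPRule) (I : Set ℕ) :
    reduct P (I ∩ atoms P) = reduct P I := by
  refine congrArg (_ '' ·) <|
    Set.sep_ext_iff.2 fun r hr => forall₂_congr fun b hb => not_congr ?_
  exact and_iff_left (Set.mem_biUnion hr (Or.inr hb))

lemma isStable_subset_atoms (h : isStable P M) : M ⊆ atoms P :=
  fun _ ha => (h.2 _ (isModel_of_subset (isPositive_reduct P M) h.1
    ((heads_reduct_subset P M).trans (heads_subset_atoms P)) subset_rfl
    Set.inter_subset_left) ha).2

theorem isStable_union_iff (hPU : potentiallyUses Q P) :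
    isStable (P ∪ Q) M ↔
      isStable P (M ∩ atoms P) ∧ isStable (Q ∪ facts (M ∩ atoms P)) M := by
  unfold isStable
  rw [reduct_union, reduct_union, reduct_facts, reduct_inter_atoms]
  exact isLeastModel_union_iff (isPositive_reduct P M) (isPositive_reduct Q M)
    (atoms_reduct_subset P M) ((heads_reduct_subset Q M).trans hPU.heads_subset)

lemma inter_atoms_eq_of_isStable_union_facts (hPU : potentiallyUses Q P) (hS : S ⊆ atoms P)
    (h : isStable (Q ∪ facts S) M) : M ∩ atoms P = S := by
  unfold isStable at h
  rw [reduct_union, reduct_facts] at h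
  exact inter_eq_of_isLeastModel_union_facts (isPositive_reduct Q M)
    ((heads_reduct_subset Q M).trans hPU.heads_subset) hS h

end Reduct

end LP

theorem splitting_union_general (P1 P2 : Set LPRule)
    (hPU : LP.potentiallyUses P2 P1) :
    {M | LP.isStable (P1 ∪ P2) M} =
      ⋃ M1 ∈ {M1 | LP.isStable P1 M1}, {M | LP.isStable (P2 ∪ LP.facts M1) M} := by
  ext M
  simp only [Set.mem_ofPred_eq, Set.mem_iUnion, exists_prop, LP.isStable_union_iff hPU]
  constructor
  · exact fun h => ⟨_, h⟩
  · rintro ⟨M1, h1, h2⟩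
    rw [LP.inter_atoms_eq_of_isStable_union_facts hPU (LP.isStable_subset_atoms h1) h2]
    exact ⟨h1, h2⟩

/-- if `P2` potentially uses `P1`, the stable models of `P1 ∪ P2`
are exactly the stable models of `P2 ∪ facts(M1)` for stable models `M1` of `P1`. -/
theorem splitting_union (P1 P2 : Set LPRule)
    (hFin1 : P1.Finite) (hFin2 : P2.Finite)
    (hPU : LP.potentiallyUses P2 P1) :
    {M | LP.isStable (P1 ∪ P2) M} =
      ⋃ M1 ∈ {M1 | LP.isStable P1 M1}, {M | LP.isStable (P2 ∪ LP.facts M1) M} :=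
  splitting_union_general P1 P2 hPU
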